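/- Every point of the segment {(s, s + 3/4) : s ∈ (0, 1/4)} and every point of the segment {(t, t + 1/4) : t ∈ (1/4, 1/2)} in 𝕋² is a fixed point of the map (V_0^2 ∘ H_0^2)². -/

import Mathlib

/- 𝕋 = ℝ/ℤ, with d_𝕋 the quotient distance (norm of the difference in AddCircle 1). -/
noncomputable section

abbrev T1 := AddCircle (1 : ℝ)

/-- The distance d_𝕋(x,y) = min{|x−y|, 1−|x−y|} on 𝕋. -/
noncomputable def dT (x y : T1) : ℝ := ‖x - y‖

/-- Horizontal wedge flow map H_ω^τ(x₁,x₂) = (x₁ + τ·d_𝕋(x₂,ω), x₂). -/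
noncomputable def Hmap (ω : T1) (τ : ℝ) (p : T1 × T1) : T1 × T1 :=
  (p.1 + (↑(τ * dT p.2 ω) : T1), p.2)

/-- Vertical wedge flow map V_ω^τ(x₁,x₂) = (x₁, x₂ + τ·d_𝕋(x₁,ω)). -/
noncomputable def Vmap (ω : T1) (τ : ℝ) (p : T1 × T1) : T1 × T1 :=
  (p.1, p.2 + (↑(τ * dT p.1 ω) : T1))

/-! The map `V_0^2 ∘ H_0^2` sends the point of the first segment with parameter `s` to the point
of the second segment with parameter `1/2 - s`, and vice versa. Since `s ↦ 1/2 - s` is an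
involution, every point of either segment is fixed by the square of the map. Both images are
computed on real representatives in `[-1/2, 1/2]`, where `d_𝕋(x, 0) = |x|`. -/

lemma dT_coe_zero {x : ℝ} (hx : |x| ≤ 1 / 2) : dT (x : T1) 0 = |x| := by
  rw [dT, sub_zero, AddCircle.norm_coe_eq_abs_iff _ one_ne_zero]
  simpa using hx

lemma Vmap_comp_Hmap_coe {τ a b a' b' : ℝ} (hb : |b| ≤ 1 / 2) (ha' : |a'| ≤ 1 / 2)
    (ha : ((a + τ * |b| : ℝ) : T1) = a') (hb' : ((b + τ * |a'| : ℝ) : T1) = b') :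
    (Vmap 0 τ ∘ Hmap 0 τ) ((a : T1), (b : T1)) = ((a' : T1), (b' : T1)) := by
  simp only [Function.comp_apply, Hmap, Vmap, dT_coe_zero hb, ← AddCircle.coe_add, ha,
    dT_coe_zero ha', hb']

lemma Vmap_comp_Hmap_first_segment {s : ℝ} (hs : s ∈ Set.Ioo (0 : ℝ) (1 / 4)) :
    (Vmap 0 2 ∘ Hmap 0 2) ((s : T1), ((s + 3 / 4 : ℝ) : T1)) =
      (((1 / 2 - s : ℝ) : T1), ((1 / 2 - s + 1 / 4 : ℝ) : T1)) := by
  obtain ⟨hs₀, hs₁⟩ := hs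
  rw [show s + 3 / 4 = s - 1 / 4 + 1 by ring, AddCircle.coe_add_period]
  apply Vmap_comp_Hmap_coe
  · rw [abs_of_neg (by linarith)]; linarith
  · rw [abs_of_pos (by linarith)]; linarith
  · rw [abs_of_neg (by linarith : s - 1 / 4 < 0)]; congr 1; ring
  · rw [abs_of_pos (by linarith : (0 : ℝ) < 1 / 2 - s),
      show 1 / 2 - s + 1 / 4 = s - 1 / 4 + 2 * (1 / 2 - s) by ring]

lemma Vmap_comp_Hmap_second_segment {t : ℝ} (ht : t ∈ Set.Ioo (1 / 4 : ℝ) (1 / 2)) :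
    (Vmap 0 2 ∘ Hmap 0 2) ((t : T1), ((t + 1 / 4 : ℝ) : T1)) =
      (((1 / 2 - t : ℝ) : T1), ((1 / 2 - t + 3 / 4 : ℝ) : T1)) := by
  obtain ⟨ht₀, ht₁⟩ := ht
  rw [show t + 1 / 4 = t - 3 / 4 + 1 by ring, AddCircle.coe_add_period]
  apply Vmap_comp_Hmap_coe
  · rw [abs_of_neg (by linarith)]; linarith
  · rw [abs_of_pos (by linarith)]; linarith
  · rw [abs_of_neg (by linarith : t - 3 / 4 < 0),
      show t + 2 * -(t - 3 / 4) = 1 / 2 - t + 1 by ring, AddCircle.coe_add_period]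
  · rw [abs_of_pos (by linarith : (0 : ℝ) < 1 / 2 - t),
      show 1 / 2 - t + 3 / 4 = t - 3 / 4 + 2 * (1 / 2 - t) + 1 by ring, AddCircle.coe_add_period]

/-- every point of the segments {(s, s+3/4) : s ∈ (0,1/4)} and
{(t, t+1/4) : t ∈ (1/4,1/2)} is a fixed point of (V_0^2 ∘ H_0^2)². -/
theorem wedge_tau2_segments_fixed_by_square :
    (∀ s ∈ Set.Ioo (0 : ℝ) (1/4),
      (Vmap 0 2 ∘ Hmap 0 2)^[2] (((s : ℝ) : T1), ((s + 3/4 : ℝ) : T1)) =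
        (((s : ℝ) : T1), ((s + 3/4 : ℝ) : T1))) ∧
    (∀ t ∈ Set.Ioo (1/4 : ℝ) (1/2),
      (Vmap 0 2 ∘ Hmap 0 2)^[2] (((t : ℝ) : T1), ((t + 1/4 : ℝ) : T1)) =
        (((t : ℝ) : T1), ((t + 1/4 : ℝ) : T1))) := by
  constructor
  · intro s hs
    have hs' : 1 / 2 - s ∈ Set.Ioo (1 / 4 : ℝ) (1 / 2) := ⟨by linarith [hs.2], by linarith [hs.1]⟩
    rw [Function.iterate_succ_apply, Function.iterate_one, Vmap_comp_Hmap_first_segment hs,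
      Vmap_comp_Hmap_second_segment hs', sub_sub_cancel]
  · intro t ht
    have ht' : 1 / 2 - t ∈ Set.Ioo (0 : ℝ) (1 / 4) := ⟨by linarith [ht.2], by linarith [ht.1]⟩
    rw [Function.iterate_succ_apply, Function.iterate_one, Vmap_comp_Hmap_second_segment ht,
      Vmap_comp_Hmap_first_segment ht', sub_sub_cancel]
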